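/- arXiv:2104.00360 — 6 statements merged into one kernel-verified Lean document; each statement's English description precedes it below -/
import Mathlib

section
/- Let E be a real inner product space, n a positive integer, and M an n×n real symmetric matrix with zero diagonal (M_{ii} = 0 for all i). Let v_1, …, v_n ∈ E with ‖v_i‖ = 1 for every i, let θ_1, …, θ_n > 0, and define w_1, …, w_n recursively by: g_i = Σ_{l<i} M_{il}·w_l + Σ_{l>i} M_{il}·v_l, y_i = ‖v_i − θ_i·g_i‖, and (assuming y_i > 0 for every i) w_i = (1/y_i)·(v_i − θ_i·g_i). Then f(v_1,…,v_n) − f(w_1,…,w_n) = Σ_{i=1}^n ((1 + y_i)/θ_i)·‖v_i − w_i‖². -/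
/-!
For each `i` the update reads `θ_i g_i = v_i - y_i w_i` with `v_i, w_i` unit vectors, which gives
`2 ⟪v_i - w_i, g_i⟫ = ((1 + y_i) / θ_i) ‖v_i - w_i‖²`. It remains to see that
`Σ_i 2 ⟪v_i - w_i, g_i⟫ = f(v) - f(w)`. As `M` is symmetric with zero diagonal,
`f(x) = 2 Σ_{l>i} M_il ⟪x_i, x_l⟫ = 2 Σ_{l<i} M_il ⟪x_i, x_l⟫`; using the first form for `v` and
the second for `w`, the mixed terms of `Σ_i 2 ⟪v_i - w_i, g_i⟫` cancel by the same symmetry.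
-/

open RealInnerProductSpace Finset

section TriangularSums

variable {ι β : Type*} [Fintype ι] [LinearOrder ι] [LocallyFiniteOrderBot ι]
  [LocallyFiniteOrderTop ι] [AddCommMonoid β]

theorem Finset.sum_sum_Iio_eq_sum_sum_Ioi (F : ι → ι → β) :
    ∑ i, ∑ l ∈ Iio i, F i l = ∑ i, ∑ l ∈ Ioi i, F l i :=
  sum_comm' fun i l => by simp

theorem Finset.sum_eq_sum_Iio_add_sum_Ioi {F : ι → β} {i : ι} (hi : F i = 0) :
    ∑ j, F j = ∑ j ∈ Iio i, F j + ∑ j ∈ Ioi i, F j := by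
  rw [← sum_union (disjoint_left.2 fun j hj hj' => lt_asymm (mem_Iio.1 hj) (mem_Ioi.1 hj'))]
  refine (sum_subset (subset_univ _) fun j _ hj => ?_).symm
  obtain rfl : j = i := by simpa using hj
  exact hi

end TriangularSums

section GramForm

variable {ι E : Type*} [Fintype ι] [LinearOrder ι] [LocallyFiniteOrderBot ι]
  [LocallyFiniteOrderTop ι] [NormedAddCommGroup E] [InnerProductSpace ℝ E]
  {M : Matrix ι ι ℝ}

theorem Matrix.IsSymm.sum_sum_Iio_mul_inner (hM : M.IsSymm) (x y : ι → E) :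
    ∑ i, ∑ l ∈ Iio i, M i l * ⟪x i, y l⟫ = ∑ i, ∑ l ∈ Ioi i, M i l * ⟪y i, x l⟫ := by
  rw [sum_sum_Iio_eq_sum_sum_Ioi]
  refine sum_congr rfl fun i _ => sum_congr rfl fun l _ => ?_
  rw [hM.apply i l, real_inner_comm]

theorem Matrix.IsSymm.sum_sum_mul_inner_eq_two_mul_Ioi (hM : M.IsSymm)
    (hdiag : ∀ i, M i i = 0) (x : ι → E) :
    ∑ i, ∑ j, M i j * ⟪x i, x j⟫ = 2 * ∑ i, ∑ l ∈ Ioi i, M i l * ⟪x i, x l⟫ := by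
  have hsplit : ∀ i, ∑ j, M i j * ⟪x i, x j⟫ =
      ∑ l ∈ Iio i, M i l * ⟪x i, x l⟫ + ∑ l ∈ Ioi i, M i l * ⟪x i, x l⟫ := fun i =>
    sum_eq_sum_Iio_add_sum_Ioi (by rw [hdiag, zero_mul])
  rw [sum_congr rfl fun i _ => hsplit i, sum_add_distrib, hM.sum_sum_Iio_mul_inner, two_mul]

theorem Matrix.IsSymm.sum_sum_mul_inner_eq_two_mul_Iio (hM : M.IsSymm)
    (hdiag : ∀ i, M i i = 0) (x : ι → E) :
    ∑ i, ∑ j, M i j * ⟪x i, x j⟫ = 2 * ∑ i, ∑ l ∈ Iio i, M i l * ⟪x i, x l⟫ := by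
  rw [hM.sum_sum_mul_inner_eq_two_mul_Ioi hdiag, hM.sum_sum_Iio_mul_inner]

theorem Matrix.IsSymm.sum_sum_mul_inner_sub_eq_gaussSeidel (hM : M.IsSymm)
    (hdiag : ∀ i, M i i = 0) (v w : ι → E) :
    ∑ i, ∑ j, M i j * ⟪v i, v j⟫ - ∑ i, ∑ j, M i j * ⟪w i, w j⟫ =
      ∑ i, 2 * ⟪v i - w i, ∑ l ∈ Iio i, M i l • w l + ∑ l ∈ Ioi i, M i l • v l⟫ := by
  have hmixed := hM.sum_sum_Iio_mul_inner v w
  rw [hM.sum_sum_mul_inner_eq_two_mul_Ioi hdiag v, hM.sum_sum_mul_inner_eq_two_mul_Iio hdiag w,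
    ← mul_sum]
  simp only [inner_add_right, inner_sub_left, inner_sum, real_inner_smul_right, sum_add_distrib,
    sum_sub_distrib]
  linarith

end GramForm

section UnitVectors

variable {E : Type*} [NormedAddCommGroup E] [InnerProductSpace ℝ E]

theorem inner_sub_sub_smul_of_norm_eq_one {v w : E} (hv : ‖v‖ = 1) (hw : ‖w‖ = 1) (y : ℝ) :
    ⟪v - w, v - y • w⟫ = (1 + y) / 2 * ‖v - w‖ ^ 2 := by
  rw [norm_sub_sq_real, hv, hw]
  simp only [inner_sub_left, inner_sub_right, real_inner_smul_right, real_inner_self_eq_norm_sq,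
    hv, hw, real_inner_comm v w]
  ring

theorem div_mul_norm_sub_sq_eq_two_mul_inner {v g w : E} {θ y : ℝ} (hv : ‖v‖ = 1) (hθ : θ ≠ 0)
    (hy : y = ‖v - θ • g‖) (hy0 : y ≠ 0) (hw : w = y⁻¹ • (v - θ • g)) :
    (1 + y) / θ * ‖v - w‖ ^ 2 = 2 * ⟪v - w, g⟫ := by
  have hw1 : ‖w‖ = 1 := by
    rw [hw, norm_smul, norm_inv, hy, norm_norm, inv_mul_cancel₀ (hy ▸ hy0)]
  have hθg : θ • g = v - y • w := by
    rw [hw, smul_smul, mul_inv_cancel₀ hy0, one_smul, sub_sub_cancel]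
  have hinner : θ * ⟪v - w, g⟫ = (1 + y) / 2 * ‖v - w‖ ^ 2 := by
    rw [← real_inner_smul_right, hθg, inner_sub_sub_smul_of_norm_eq_one hv hw1]
  field_simp
  linear_combination (-2) * hinner

end UnitVectors

theorem stmt_0_general {E : Type*} [NormedAddCommGroup E] [InnerProductSpace ℝ E]
    (n : ℕ) (M : Matrix (Fin n) (Fin n) ℝ)
    (hMsymm : M.IsSymm) (hMdiag : ∀ i, M i i = 0)
    (v w g : Fin n → E) (y θ : Fin n → ℝ)
    (hv : ∀ i, ‖v i‖ = 1) (hθ : ∀ i, 0 < θ i)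
    (hg : ∀ i, g i = (∑ l ∈ Finset.Iio i, M i l • w l) + ∑ l ∈ Finset.Ioi i, M i l • v l)
    (hy : ∀ i, y i = ‖v i - θ i • g i‖) (hy0 : ∀ i, 0 < y i)
    (hw : ∀ i, w i = (y i)⁻¹ • (v i - θ i • g i)) :
    (∑ i, ∑ j, M i j * ⟪v i, v j⟫) - (∑ i, ∑ j, M i j * ⟪w i, w j⟫) =
      ∑ i, ((1 + y i) / θ i) * ‖v i - w i‖ ^ 2 := by
  have hstep : ∀ i, (1 + y i) / θ i * ‖v i - w i‖ ^ 2 = 2 * ⟪v i - w i, g i⟫ := fun i =>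
    div_mul_norm_sub_sq_eq_two_mul_inner (hv i) (hθ i).ne' (hy i) (hy0 i).ne' (hw i)
  simp only [hstep, hg]
  exact hMsymm.sum_sum_mul_inner_sub_eq_gaussSeidel hMdiag v w

/-- Descent identity for one full Gauss–Seidel sweep of the mixing update (Lemma 5). -/
theorem stmt_0 {E : Type*} [NormedAddCommGroup E] [InnerProductSpace ℝ E]
    (n : ℕ) (hn : 0 < n) (M : Matrix (Fin n) (Fin n) ℝ)
    (hMsymm : M.IsSymm) (hMdiag : ∀ i, M i i = 0)
    (v w g : Fin n → E) (y θ : Fin n → ℝ)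
    (hv : ∀ i, ‖v i‖ = 1) (hθ : ∀ i, 0 < θ i)
    (hg : ∀ i, g i = (∑ l ∈ Finset.Iio i, M i l • w l) + ∑ l ∈ Finset.Ioi i, M i l • v l)
    (hy : ∀ i, y i = ‖v i - θ i • g i‖) (hy0 : ∀ i, 0 < y i)
    (hw : ∀ i, w i = (y i)⁻¹ • (v i - θ i • g i)) :
    (∑ i, ∑ j, M i j * ⟪v i, v j⟫) - (∑ i, ∑ j, M i j * ⟪w i, w j⟫) =
      ∑ i, ((1 + y i) / θ i) * ‖v i - w i‖ ^ 2 :=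
  stmt_0_general n M hMsymm hMdiag v w g y θ hv hθ hg hy hy0 hw
end

section
/- Let E be a real inner product space, let v, g ∈ E with ‖v‖ = 1, let θ > 0, set y = ‖v − θ·g‖, assume y > 0, and set v̂ = (1/y)·(v − θ·g). Then 2·⟨g, v − v̂⟩ = ((1 + y)/θ)·‖v − v̂‖². -/
open RealInnerProductSpace

theorem inner_sub_smul_sub_of_norm_eq_one {E : Type*} [NormedAddCommGroup E]
    [InnerProductSpace ℝ E] {v w : E} (hv : ‖v‖ = 1) (hw : ‖w‖ = 1) (y : ℝ) :
    ⟪v - y • w, v - w⟫ = (1 + y) / 2 * ‖v - w‖ ^ 2 := by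
  rw [norm_sub_sq_real]
  simp only [inner_sub_left, inner_sub_right, real_inner_smul_left,
    real_inner_self_eq_norm_sq, hv, hw, real_inner_comm w v]
  ring

/-- Per-coordinate identity for the normalized gradient update on the unit sphere. -/
theorem stmt_1 {E : Type*} [NormedAddCommGroup E] [InnerProductSpace ℝ E]
    (v g : E) (hv : ‖v‖ = 1) (θ : ℝ) (hθ : 0 < θ)
    (y : ℝ) (hy : y = ‖v - θ • g‖) (hy0 : 0 < y)
    (vhat : E) (hvhat : vhat = y⁻¹ • (v - θ • g)) :
    2 * ⟪g, v - vhat⟫ = ((1 + y) / θ) * ‖v - vhat‖ ^ 2 := by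
  have hvhat_norm : ‖vhat‖ = 1 := by
    rw [hvhat, hy]
    exact norm_smul_inv_norm (norm_pos_iff.mp (hy ▸ hy0))
  have hθg : θ • g = v - y • vhat := by
    rw [hvhat, smul_smul, mul_inv_cancel₀ hy0.ne', one_smul, sub_sub_cancel]
  have hθ_inner : θ * ⟪g, v - vhat⟫ = (1 + y) / 2 * ‖v - vhat‖ ^ 2 := by
    rw [← real_inner_smul_left, hθg, inner_sub_smul_sub_of_norm_eq_one hv hvhat_norm]
  rw [div_mul_eq_mul_div, eq_div_iff hθ.ne']
  linarith
end

section
/- Let E be a real inner product space, n a positive integer, and M an n×n real symmetric matrix with zero diagonal (M_{ii} = 0 for all i). For each i let θ_i > 0 satisfy θ_i·Σ_{j=1}^n |M_{ij}| < 1. Let v_i(t) for t ∈ ℕ be the Gauss–Seidel sequence defined by: ‖v_i(0)‖ = 1 for all i, and for each t and each i (in increasing order of i), g_i(t) = Σ_{l<i} M_{il}·v_l(t+1) + Σ_{l>i} M_{il}·v_l(t) and v_i(t+1) = (v_i(t) − θ_i·g_i(t))/‖v_i(t) − θ_i·g_i(t)‖. Then: (a) all the updates are well defined, with ‖v_i(t)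 − θ_i·g_i(t)‖ ≥ 1 − θ_i·Σ_{j}|M_{ij}| > 0 and ‖v_i(t)‖ = 1 for all i and t; (b) the objective values f(v_1(t),…,v_n(t)) are nonincreasing in t; and (c) Σ_{t=0}^∞ Σ_{i=1}^n ‖v_i(t+1) − v_i(t)‖² ≤ θ̄·(f(v_1(0),…,v_n(0)) + Σ_{i,j}|M_{ij}|), where θ̄ = max_i θ_i; in particular ‖v_i(t+1) − v_i(t)‖ → 0 as t → ∞ for every i. -/
/-!
Each block step is a gradient step on a single vector followed by renormalization. Since `f` is
quadratic with zero diagonal, replacing `v_k` by `v_k + δ` changes `f` by exactly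
`2 ⟪δ, ∑_l M_kl v_l⟫`, and the renormalized point beats `v_k` for `⟪·, v_k - θ_k g_k⟫` on the
sphere; together these give a decrease of at least `‖δ‖² / θ_k`. Passing through the intermediate
configurations of a sweep (the first `k` vectors already updated), `f` drops by at least
`θ̄⁻¹ ∑_i ‖v_i(t+1) - v_i(t)‖²` per sweep, and `f ≥ -∑ |M_ij|` on unit vectors makes these drops
summable. The vectors stay on the sphere because `‖g_i‖ ≤ ∑_j |M_ij|` keeps `v_i - θ_i g_i` at
distance at least `1 - θ_i ∑_j |M_ij| > 0` from `0`.
-/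

open RealInnerProductSpace Finset Filter Topology

section UnitSphere

variable {E : Type*} [NormedAddCommGroup E] [InnerProductSpace ℝ E]

lemma one_sub_mul_le_norm_sub_smul {u g : E} {θ S : ℝ} (hu : ‖u‖ = 1) (hθ : 0 ≤ θ)
    (hg : ‖g‖ ≤ S) : 1 - θ * S ≤ ‖u - θ • g‖ := by
  have hθg : ‖θ • g‖ ≤ θ * S := by
    rw [norm_smul, Real.norm_of_nonneg hθ]
    exact mul_le_mul_of_nonneg_left hg hθ
  linarith [norm_sub_norm_le u (θ • g)]

/-- `u'` maximizes `⟪·, u - θ • g⟫` on the unit sphere, so in particular beats `u`. -/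
lemma norm_sub_sq_le_of_eq_normalize {u u' g : E} {θ : ℝ} (hu : ‖u‖ = 1)
    (hx : u - θ • g ≠ 0) (hu' : u' = ‖u - θ • g‖⁻¹ • (u - θ • g)) :
    ‖u' - u‖ ^ 2 ≤ -(2 * θ) * ⟪u' - u, g⟫ := by
  set x := u - θ • g with hx_def
  have hu'_norm : ‖u'‖ = 1 := hu' ▸ norm_smul_inv_norm hx
  have hu'x : ⟪u', x⟫ = ‖x‖ := by
    rw [hu', real_inner_smul_left, real_inner_self_eq_norm_sq, sq,
      inv_mul_cancel_left₀ (norm_ne_zero_iff.mpr hx)]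
  have hux : ⟪u, x⟫ ≤ ‖x‖ := by simpa [hu] using real_inner_le_norm u x
  have hsq : ‖u' - u‖ ^ 2 = 2 - 2 * ⟪u', u⟫ := by
    rw [norm_sub_sq_real, hu, hu'_norm]; ring
  simp only [hx_def, inner_sub_right, real_inner_smul_right, real_inner_self_eq_norm_sq, hu,
    one_pow] at hu'x hux
  rw [hsq, inner_sub_left]
  linarith

lemma norm_sum_smul_le_sum_abs {ι : Type*} [Fintype ι] (c : ι → ℝ) {w : ι → E}
    (hw : ∀ l, ‖w l‖ ≤ 1) : ‖∑ l, c l • w l‖ ≤ ∑ l, |c l| :=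
  (norm_sum_le _ _).trans <| sum_le_sum fun l _ => by
    rw [norm_smul, Real.norm_eq_abs]
    exact mul_le_of_le_one_right (abs_nonneg _) (hw l)

end UnitSphere

lemma add_sum_le_of_forall_succ_add_le {n : ℕ} {a : ℕ → ℝ} {b : Fin n → ℝ}
    (h : ∀ i : Fin n, a (i + 1) + b i ≤ a i) : a n + ∑ i, b i ≤ a 0 := by
  induction n with
  | zero => simp
  | succ n ih =>
    rw [Fin.sum_univ_castSucc]
    have hlast := h (Fin.last n)
    have hinit := ih (b := fun i => b i.castSucc) fun i => h i.castSucc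
    simp only [Fin.val_last] at hlast hinit ⊢
    linarith

lemma summable_and_tsum_le_of_succ_add_div_le {a b : ℕ → ℝ} {c B : ℝ} (hc : 0 < c)
    (hb : ∀ t, 0 ≤ b t) (h : ∀ t, a (t + 1) + b t / c ≤ a t) (hB : ∀ t, -B ≤ a t) :
    Summable b ∧ ∑' t, b t ≤ c * (a 0 + B) := by
  have hpartial : ∀ T, ∑ t ∈ range T, b t ≤ c * (a 0 + B) := fun T => by
    have hT := add_sum_le_of_forall_succ_add_le (b := fun t : Fin T => b t / c) fun t => h t
    rw [Fin.sum_univ_eq_sum_range (fun t => b t / c), ← sum_div] at hT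
    have := hB T
    rw [← div_le_iff₀' hc]
    linarith
  have hsum := summable_of_sum_range_le hb hpartial
  exact ⟨hsum, hsum.tsum_le_of_sum_range_le hpartial⟩

lemma tendsto_zero_of_summable_sq {f : ℕ → ℝ} (hf : ∀ t, 0 ≤ f t)
    (h : Summable fun t => f t ^ 2) : Tendsto f atTop (𝓝 0) := by
  simpa [Real.sqrt_sq (hf _)] using h.tendsto_atTop_zero.sqrt

namespace GaussSeidel

section Sweep

variable {E : Type*} {n : ℕ} {v : ℕ → Fin n → E} {t : ℕ}

def sweepState (v : ℕ → Fin n → E) (t k : ℕ) : Fin n → E :=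
  fun l => if (l : ℕ) < k then v (t + 1) l else v t l

lemma sweepState_zero : sweepState v t 0 = v t := by
  ext l
  simp [sweepState]

lemma sweepState_of_le {k : ℕ} (hk : n ≤ k) : sweepState v t k = v (t + 1) := by
  ext l
  simp [sweepState, l.isLt.trans_le hk]

lemma sweepState_succ (i : Fin n) :
    sweepState v t (i + 1) = Function.update (sweepState v t i) i (v (t + 1) i) := by
  ext l
  rcases eq_or_ne l i with rfl | hli
  · simp [sweepState]
  · have hli' : (l : ℕ) ≠ i := Fin.val_ne_of_ne hli
    simp only [sweepState, Function.update_of_ne hli]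
    congr 1
    grind

lemma sweepState_apply_self (i : Fin n) : sweepState v t i i = v t i := by
  simp [sweepState]

lemma norm_sweepState [Norm E] (hv : ∀ t i, ‖v t i‖ = 1) (k : ℕ) (l : Fin n) :
    ‖sweepState v t k l‖ = 1 := by
  unfold sweepState
  split_ifs <;> apply hv

lemma sum_Iio_add_sum_Ioi_eq_sum_sweepState [AddCommMonoid E] [Module ℝ E]
    {M : Matrix (Fin n) (Fin n) ℝ} {i : Fin n} (hMii : M i i = 0) :
    (∑ l ∈ Iio i, M i l • v (t + 1) l) + ∑ l ∈ Ioi i, M i l • v t l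
      = ∑ l, M i l • sweepState v t i l := by
  simp only [sweepState, Fin.val_fin_lt, smul_ite, sum_ite, filter_gt_eq_Iio, not_lt,
    filter_le_eq_Ici, ← add_sum_Ioi_eq_sum_Ici, hMii, zero_smul, zero_add]

end Sweep

variable {E : Type*} [NormedAddCommGroup E] [InnerProductSpace ℝ E] {n : ℕ}
  (M : Matrix (Fin n) (Fin n) ℝ)

noncomputable def objective (w : Fin n → E) : ℝ :=
  ∑ i, ∑ j, M i j * ⟪w i, w j⟫

/-- The `k`-th block step of Gauss–Seidel: a gradient step of size `θ k` on the `k`-th vector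
(half the partial gradient of `f` is `∑ l, M k l • w l`), renormalized to the unit sphere. -/
noncomputable def sphereStep (θ : Fin n → ℝ) (w : Fin n → E) (k : Fin n) : E :=
  ‖w k - θ k • ∑ l, M k l • w l‖⁻¹ • (w k - θ k • ∑ l, M k l • w l)

variable {M}

lemma objective_update (hM : M.IsSymm) (hMdiag : ∀ i, M i i = 0) (w : Fin n → E) (k : Fin n)
    (x : E) :
    objective M (Function.update w k x) = objective M w + 2 * ⟪x - w k, ∑ l, M k l • w l⟫ := by
  have hupdate : Function.update w k x = w + Pi.single k (x - w k) := by
    ext l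
    rcases eq_or_ne l k with rfl | h <;> simp [*]
  rw [hupdate, objective, objective]
  simp only [Pi.add_apply, inner_add_left, inner_add_right, mul_add, sum_add_distrib]
  simp only [Pi.single_apply, apply_ite (inner ℝ), ite_apply, inner_zero_left, mul_ite, mul_zero,
    sum_ite_irrel, sum_const_zero, sum_ite_eq', mem_univ, ↓reduceIte, apply_ite (inner ℝ (w _)),
    real_inner_comm (x - w k), inner_zero_right, hM.apply k, apply_ite (inner ℝ (x - w k)),
    inner_self_eq_norm_sq_to_K, Real.ringHom_apply, hMdiag, zero_mul, add_zero, inner_sum,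
    inner_smul_right]
  ring

lemma neg_sum_abs_le_objective {w : Fin n → E} (hw : ∀ i, ‖w i‖ = 1) :
    -∑ i, ∑ j, |M i j| ≤ objective M w := by
  refine neg_le_of_abs_le <| (abs_sum_le_sum_abs _ _).trans <| sum_le_sum fun i _ =>
    (abs_sum_le_sum_abs _ _).trans <| sum_le_sum fun j _ => ?_
  have hinner : |⟪w i, w j⟫| ≤ 1 := by
    simpa [hw] using abs_real_inner_le_norm (w i) (w j)
  rw [abs_mul]
  exact mul_le_of_le_one_right (abs_nonneg _) hinner

section Step

variable {θ : Fin n → ℝ} {w : Fin n → E} {k : Fin n}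

lemma one_sub_mul_le_norm_step (hw : ∀ i, ‖w i‖ = 1) (hθ : 0 ≤ θ k) :
    1 - θ k * ∑ j, |M k j| ≤ ‖w k - θ k • ∑ l, M k l • w l‖ :=
  one_sub_mul_le_norm_sub_smul (hw k) hθ (norm_sum_smul_le_sum_abs _ fun l => (hw l).le)

lemma sub_smul_sum_ne_zero (hw : ∀ i, ‖w i‖ = 1) (hθ : 0 ≤ θ k) (hθM : θ k * ∑ j, |M k j| < 1) :
    w k - θ k • ∑ l, M k l • w l ≠ 0 :=
  norm_pos_iff.mp <| (sub_pos.mpr hθM).trans_le (one_sub_mul_le_norm_step hw hθ)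

lemma norm_sphereStep (hw : ∀ i, ‖w i‖ = 1) (hθ : 0 ≤ θ k) (hθM : θ k * ∑ j, |M k j| < 1) :
    ‖sphereStep M θ w k‖ = 1 :=
  norm_smul_inv_norm (sub_smul_sum_ne_zero hw hθ hθM)

lemma objective_update_sphereStep_add_le (hM : M.IsSymm) (hMdiag : ∀ i, M i i = 0)
    (hw : ∀ i, ‖w i‖ = 1) (hθ : 0 < θ k) (hθM : θ k * ∑ j, |M k j| < 1) :
    objective M (Function.update w k (sphereStep M θ w k)) + ‖sphereStep M θ w k - w k‖ ^ 2 / θ k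
      ≤ objective M w := by
  have hdesc : ‖sphereStep M θ w k - w k‖ ^ 2
      ≤ -(2 * θ k) * ⟪sphereStep M θ w k - w k, ∑ l, M k l • w l⟫ :=
    norm_sub_sq_le_of_eq_normalize (hw k) (sub_smul_sum_ne_zero hw hθ.le hθM) rfl
  have hdiv : ‖sphereStep M θ w k - w k‖ ^ 2 / θ k
      ≤ -(2 * ⟪sphereStep M θ w k - w k, ∑ l, M k l • w l⟫) := by
    rw [div_le_iff₀ hθ]
    linarith
  rw [objective_update hM hMdiag]
  linarith

end Step

section Convergence

variable {θ : Fin n → ℝ} {v : ℕ → Fin n → E}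

lemma norm_eq_one_of_sweep (hθ : ∀ i, 0 ≤ θ i) (hθM : ∀ i, θ i * ∑ j, |M i j| < 1)
    (hv0 : ∀ i, ‖v 0 i‖ = 1)
    (hstep : ∀ t i, v (t + 1) i = sphereStep M θ (sweepState v t i) i) (t : ℕ) (i : Fin n) :
    ‖v t i‖ = 1 := by
  induction t generalizing i with
  | zero => exact hv0 i
  | succ t ih =>
    suffices h : ∀ k l, ‖sweepState v t k l‖ = 1 by
      simpa [sweepState_of_le le_rfl] using h n i
    intro k
    induction k with
    | zero => simpa [sweepState_zero] using ih
    | succ k ihk =>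
      intro l
      by_cases hlk : (l : ℕ) < k + 1
      · rcases (Nat.lt_succ_iff_lt_or_eq.mp hlk) with hlt | heq
        · simpa [sweepState, hlt, hlk] using ihk l
        · subst heq
          simpa [sweepState, hstep] using norm_sphereStep ihk (hθ l) (hθM l)
      · simpa [sweepState, hlk] using ih l

lemma objective_succ_add_div_le (hM : M.IsSymm) (hMdiag : ∀ i, M i i = 0) (hθ : ∀ i, 0 < θ i)
    (hθM : ∀ i, θ i * ∑ j, |M i j| < 1) {θbar : ℝ} (hθbar : ∀ i, θ i ≤ θbar)
    (hv : ∀ t i, ‖v t i‖ = 1)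
    (hstep : ∀ t i, v (t + 1) i = sphereStep M θ (sweepState v t i) i) (t : ℕ) :
    objective M (v (t + 1)) + (∑ i, ‖v (t + 1) i - v t i‖ ^ 2) / θbar ≤ objective M (v t) := by
  have hsweep := add_sum_le_of_forall_succ_add_le
    (a := fun k => objective M (sweepState v t k))
    (b := fun i => ‖v (t + 1) i - v t i‖ ^ 2 / θbar) fun i => by
      have hdesc := objective_update_sphereStep_add_le hM hMdiag
        (norm_sweepState (t := t) hv i) (hθ i) (hθM i)
      rw [← hstep, ← sweepState_succ, sweepState_apply_self] at hdesc
      have hθi : ‖v (t + 1) i - v t i‖ ^ 2 / θbar ≤ ‖v (t + 1) i - v t i‖ ^ 2 / θ i :=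
        div_le_div_of_nonneg_left (sq_nonneg _) (hθ i) (hθbar i)
      linarith
  simpa only [sweepState_of_le le_rfl, sweepState_zero, sum_div] using hsweep

end Convergence

end GaussSeidel

open GaussSeidel

theorem stmt_8_general {E : Type*} [NormedAddCommGroup E] [InnerProductSpace ℝ E]
    (n : ℕ) (M : Matrix (Fin n) (Fin n) ℝ)
    (hMsymm : M.IsSymm) (hMdiag : ∀ i, M i i = 0)
    (θ : Fin n → ℝ) (hθ : ∀ i, 0 < θ i) (hθM : ∀ i, θ i * ∑ j, |M i j| < 1)
    (θbar : ℝ) (hθbar : IsGreatest (Set.range θ) θbar)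
    (v : ℕ → Fin n → E) (g : ℕ → Fin n → E)
    (hv0 : ∀ i, ‖v 0 i‖ = 1)
    (hg : ∀ t i, g t i =
      (∑ l ∈ Finset.Iio i, M i l • v (t + 1) l) + ∑ l ∈ Finset.Ioi i, M i l • v t l)
    (hup : ∀ t i, v (t + 1) i = ‖v t i - θ i • g t i‖⁻¹ • (v t i - θ i • g t i)) :
    (∀ t i, 1 - θ i * ∑ j, |M i j| ≤ ‖v t i - θ i • g t i‖ ∧
        0 < 1 - θ i * ∑ j, |M i j| ∧ ‖v t i‖ = 1) ∧
    (Antitone fun t => ∑ i, ∑ j, M i j * ⟪v t i, v t j⟫) ∧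
    (∑' t : ℕ, ∑ i, ‖v (t + 1) i - v t i‖ ^ 2 ≤
        θbar * ((∑ i, ∑ j, M i j * ⟪v 0 i, v 0 j⟫) + ∑ i, ∑ j, |M i j|)) ∧
    (∀ i, Tendsto (fun t => ‖v (t + 1) i - v t i‖) atTop (𝓝 0)) := by
  have hg' : ∀ t i, g t i = ∑ l, M i l • sweepState v t i l := fun t i => by
    rw [hg, sum_Iio_add_sum_Ioi_eq_sum_sweepState (hMdiag i)]
  have hstep : ∀ t i, v (t + 1) i = sphereStep M θ (sweepState v t i) i := fun t i => by
    rw [hup, hg', sphereStep, sweepState_apply_self]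
  have hv := norm_eq_one_of_sweep (fun i => (hθ i).le) hθM hv0 hstep
  have hθbar_pos : 0 < θbar := by
    obtain ⟨i, hi⟩ := hθbar.1
    exact hi ▸ hθ i
  have hdesc := objective_succ_add_div_le hMsymm hMdiag hθ hθM (fun i => hθbar.2 ⟨i, rfl⟩) hv
    hstep
  have hS : ∀ t, 0 ≤ ∑ i, ‖v (t + 1) i - v t i‖ ^ 2 := fun t =>
    sum_nonneg fun i _ => sq_nonneg _
  obtain ⟨hsum, htsum⟩ := summable_and_tsum_le_of_succ_add_div_le hθbar_pos hS hdesc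
    (fun t => neg_sum_abs_le_objective (hv t))
  refine ⟨fun t i => ⟨?_, sub_pos.mpr (hθM i), hv t i⟩, antitone_nat_of_succ_le fun t => ?_,
    htsum, fun i => tendsto_zero_of_summable_sq (fun t => norm_nonneg _) ?_⟩
  · simpa only [hg', sweepState_apply_self] using
      one_sub_mul_le_norm_step (norm_sweepState (t := t) hv i) (hθ i).le
  · show objective M (v (t + 1)) ≤ objective M (v t)
    linarith [hdesc t, div_nonneg (hS t) hθbar_pos.le]
  · exact hsum.of_nonneg_of_le (fun t => sq_nonneg _)
      fun t => single_le_sum (f := fun i => ‖v (t + 1) i - v t i‖ ^ 2) (fun _ _ => sq_nonneg _)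
        (mem_univ i)

/-- Convergence-to-critical-points part of Theorem 1 for the synchronous algorithm in its
Gauss–Seidel form: the updates are well defined, the objective values are nonincreasing,
and the successive iterates are asymptotically stationary. -/
theorem stmt_8 {E : Type*} [NormedAddCommGroup E] [InnerProductSpace ℝ E]
    (n : ℕ) (hn : 0 < n) (M : Matrix (Fin n) (Fin n) ℝ)
    (hMsymm : M.IsSymm) (hMdiag : ∀ i, M i i = 0)
    (θ : Fin n → ℝ) (hθ : ∀ i, 0 < θ i) (hθM : ∀ i, θ i * ∑ j, |M i j| < 1)
    (θbar : ℝ) (hθbar : IsGreatest (Set.range θ) θbar)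
    (v : ℕ → Fin n → E) (g : ℕ → Fin n → E)
    (hv0 : ∀ i, ‖v 0 i‖ = 1)
    (hg : ∀ t i, g t i =
      (∑ l ∈ Finset.Iio i, M i l • v (t + 1) l) + ∑ l ∈ Finset.Ioi i, M i l • v t l)
    (hup : ∀ t i, v (t + 1) i = ‖v t i - θ i • g t i‖⁻¹ • (v t i - θ i • g t i)) :
    (∀ t i, 1 - θ i * ∑ j, |M i j| ≤ ‖v t i - θ i • g t i‖ ∧
        0 < 1 - θ i * ∑ j, |M i j| ∧ ‖v t i‖ = 1) ∧
    (Antitone fun t => ∑ i, ∑ j, M i j * ⟪v t i, v t j⟫) ∧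
    (∑' t : ℕ, ∑ i, ‖v (t + 1) i - v t i‖ ^ 2 ≤
        θbar * ((∑ i, ∑ j, M i j * ⟪v 0 i, v 0 j⟫) + ∑ i, ∑ j, |M i j|)) ∧
    (∀ i, Tendsto (fun t => ‖v (t + 1) i - v t i‖) atTop (𝓝 0)) :=
  stmt_8_general n M hMsymm hMdiag θ hθ hθM θbar hθbar v g hv0 hg hup
end

section
/- Let E be a real inner product space, n a positive integer, and M an n×n real symmetric matrix with zero diagonal (M_{ii} = 0 for all i). Let v_1, …, v_n ∈ E with ‖v_i‖ = 1 for all i, let θ_1, …, θ_n > 0, and suppose the Gauss–Seidel sweep fixes (v_1,…,v_n): that is, with g_i = Σ_{l≠i} M_{il}·v_l and y_i = ‖v_i − θ_i·g_i‖ > 0, one has v_i = (1/y_i)·(v_i − θ_i·g_i) for every i. Then for every i, g_i = ⟨v_i, g_i⟩·v_i, i.e., the Riemannian gradient of f at (v_1,…,v_n) on the product of unit spheres vanishes. -/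
open RealInnerProductSpace

theorem eq_div_smul_of_eq_inv_smul_sub {K V : Type*} [Field K] [AddCommGroup V] [Module K V]
    {v g : V} {θ y : K} (hθ : θ ≠ 0) (hy : y ≠ 0) (hfix : v = y⁻¹ • (v - θ • g)) :
    g = ((1 - y) / θ) • v := by
  have hscaled : y • v = v - θ • g := by
    rw [hfix, smul_smul, mul_inv_cancel₀ hy, one_smul, ← hfix]
  have hθg : θ • g = (1 - y) • v := by
    rw [sub_smul, one_smul, hscaled, sub_sub_cancel]
  rw [div_eq_inv_mul, mul_smul, ← hθg, smul_smul, inv_mul_cancel₀ hθ, one_smul]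

theorem eq_inner_smul_of_eq_smul {E : Type*} [NormedAddCommGroup E] [InnerProductSpace ℝ E]
    {v g : E} {c : ℝ} (hv : ‖v‖ = 1) (hg : g = c • v) : g = ⟪v, g⟫ • v := by
  have hinner : ⟪v, g⟫ = c := by
    rw [hg, real_inner_smul_right, real_inner_self_eq_norm_sq, hv, one_pow, mul_one]
  rw [hinner, hg]

theorem stmt_10_general {E : Type*} [NormedAddCommGroup E] [InnerProductSpace ℝ E]
    (n : ℕ) (v g : Fin n → E) (θ y : Fin n → ℝ)
    (hv : ∀ i, ‖v i‖ = 1) (hθ : ∀ i, 0 < θ i) (hy0 : ∀ i, 0 < y i)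
    (hfix : ∀ i, v i = (y i)⁻¹ • (v i - θ i • g i)) :
    ∀ i, g i = ⟪v i, g i⟫ • v i := fun i =>
  eq_inner_smul_of_eq_smul (hv i)
    (eq_div_smul_of_eq_inv_smul_sub (hθ i).ne' (hy0 i).ne' (hfix i))

/-- Fixed points of the synchronous Gauss–Seidel sweep are first-order critical points of
the sphere-constrained problem: each Riemannian gradient component vanishes. -/
theorem stmt_10 {E : Type*} [NormedAddCommGroup E] [InnerProductSpace ℝ E]
    (n : ℕ) (hn : 0 < n) (M : Matrix (Fin n) (Fin n) ℝ)
    (hMsymm : M.IsSymm) (hMdiag : ∀ i, M i i = 0)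
    (v g : Fin n → E) (θ y : Fin n → ℝ)
    (hv : ∀ i, ‖v i‖ = 1) (hθ : ∀ i, 0 < θ i)
    (hg : ∀ i, g i = ∑ l ∈ Finset.univ.erase i, M i l • v l)
    (hy : ∀ i, y i = ‖v i - θ i • g i‖) (hy0 : ∀ i, 0 < y i)
    (hfix : ∀ i, v i = (y i)⁻¹ • (v i - θ i • g i)) :
    ∀ i, g i = ⟪v i, g i⟫ • v i :=
  stmt_10_general n v g θ y hv hθ hy0 hfix
end

section
/- Let E be a real inner product space, n a positive integer, and M an n×n real symmetric matrix with zero diagonal (M_{ii} = 0 for all i). Let v_1, …, v_n ∈ E with ‖v_i‖ = 1, let θ_1, …, θ_n > 0, and define w_1, …, w_n recursively by g_i = Σ_{l<i} M_{il}·w_l + Σ_{l>i} M_{il}·v_l, y_i = ‖v_i − θ_i·g_i‖ > 0, w_i = (1/y_i)·(v_i − θ_i·g_i). Then f(w_1,…,w_n) ≤ f(v_1,…,v_n), with equality if and only if w_i = v_i for all i. -/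
/-!
Updating the single coordinate `i` of a configuration `u` changes the energy
`f u = ∑ i j, M i j ⟪u i, u j⟫` by `2 ⟪u' i - u i, ∑ j, M i j • u j⟫`, because `M` is symmetric with
zero diagonal. A Gauss–Seidel sweep is a chain of `n` such updates, so `f w - f v` telescopes into
`∑ i, 2 ⟪w i - v i, g i⟫`. Since `θ i • g i = v i - y i • w i` with `v i`, `w i` unit vectors, the
`i`-th term equals `-(1 + y i) / θ i * ‖w i - v i‖ ^ 2`, which is nonpositive and vanishes only when
`w i = v i`.
-/

open RealInnerProductSpace Finset

section

variable {ι E : Type*} [Fintype ι] [NormedAddCommGroup E] [InnerProductSpace ℝ E]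

noncomputable def gramEnergy (M : Matrix ι ι ℝ) (u : ι → E) : ℝ :=
  ∑ i, ∑ j, M i j * ⟪u i, u j⟫

noncomputable def localField (M : Matrix ι ι ℝ) (u : ι → E) (i : ι) : E :=
  ∑ j, M i j • u j

lemma inner_localField (M : Matrix ι ι ℝ) (u : ι → E) (i : ι) (x : E) :
    ⟪x, localField M u i⟫ = ∑ j, M i j * ⟪x, u j⟫ := by
  simp only [localField, inner_sum, real_inner_smul_right]

lemma localField_eq_of_eq_of_ne {M : Matrix ι ι ℝ} {u u' : ι → E} {i : ι} (hMi : M i i = 0)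
    (h : ∀ j, j ≠ i → u' j = u j) : localField M u' i = localField M u i := by
  refine sum_congr rfl fun j _ => ?_
  by_cases hj : j = i
  · simp [hj, hMi]
  · rw [h j hj]

lemma gramEnergy_sub_of_eq_of_ne {M : Matrix ι ι ℝ} (hM : M.IsSymm) {i : ι} (hMi : M i i = 0)
    {u u' : ι → E} (h : ∀ j, j ≠ i → u' j = u j) :
    gramEnergy M u' - gramEnergy M u = 2 * ⟪u' i - u i, localField M u i⟫ := by
  have hzero : ∀ a, a ≠ i → u' a - u a = 0 := fun a ha => sub_eq_zero.2 (h a ha)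
  have hleft : ∑ a, ∑ b, M a b * ⟪u' a - u a, u' b⟫ = ⟪u' i - u i, localField M u i⟫ := by
    rw [sum_eq_single i (fun a _ ha => by simp [hzero a ha]) (by simp),
      ← inner_localField, localField_eq_of_eq_of_ne hMi h]
  have hright : ∑ a, ∑ b, M a b * ⟪u a, u' b - u b⟫ = ⟪u' i - u i, localField M u i⟫ := by
    rw [sum_comm, sum_eq_single i (fun b _ hb => by simp [hzero b hb]) (by simp),
      inner_localField]
    exact sum_congr rfl fun a _ => by rw [hM.apply a i, real_inner_comm]
  calc gramEnergy M u' - gramEnergy M u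
      = ∑ a, ∑ b, M a b * ⟪u' a - u a, u' b⟫ + ∑ a, ∑ b, M a b * ⟪u a, u' b - u b⟫ := by
        simp only [gramEnergy, inner_sub_left, inner_sub_right, mul_sub, sum_sub_distrib]
        ring
    _ = 2 * ⟪u' i - u i, localField M u i⟫ := by rw [hleft, hright]; ring

end

/-- The configuration after the first `k` steps of a sweep from `v` to `w`. -/
def partialSweep {α : Type*} {n : ℕ} (v w : Fin n → α) (k : ℕ) : Fin n → α :=
  fun j => if (j : ℕ) < k then w j else v j

lemma partialSweep_succ_eq_of_ne {α : Type*} {n : ℕ} (v w : Fin n → α) (i : Fin n) {j : Fin n}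
    (hj : j ≠ i) : partialSweep v w (i + 1) j = partialSweep v w i j := by
  have : (j : ℕ) ≠ i := Fin.val_ne_of_ne hj
  unfold partialSweep
  split_ifs <;> first | rfl | omega

section

variable {E : Type*} [NormedAddCommGroup E] [InnerProductSpace ℝ E] {n : ℕ}

lemma localField_partialSweep {M : Matrix (Fin n) (Fin n) ℝ} (hMdiag : ∀ i, M i i = 0)
    (v w : Fin n → E) (i : Fin n) :
    localField M (partialSweep v w i) i =
      ∑ l ∈ Iio i, M i l • w l + ∑ l ∈ Ioi i, M i l • v l := by
  have hsplit : ∀ l, M i l • partialSweep v w i l =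
      (if l < i then M i l • w l else 0) + (if i < l then M i l • v l else 0) := by
    intro l
    rcases lt_trichotomy l i with hl | rfl | hl
    · simp [partialSweep, hl, hl.not_gt, Fin.lt_def.1 hl]
    · simp [hMdiag]
    · simp [partialSweep, hl, hl.not_gt, (Fin.lt_def.1 hl).not_gt]
  rw [localField, sum_congr rfl fun l _ => hsplit l, sum_add_distrib, ← sum_filter,
    ← sum_filter, filter_gt_eq_Iio, filter_lt_eq_Ioi]

lemma gramEnergy_sub_eq_sum_sweep {M : Matrix (Fin n) (Fin n) ℝ} (hM : M.IsSymm)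
    (hMdiag : ∀ i, M i i = 0) (v w : Fin n → E) :
    gramEnergy M w - gramEnergy M v =
      ∑ i, 2 * ⟪w i - v i, ∑ l ∈ Iio i, M i l • w l + ∑ l ∈ Ioi i, M i l • v l⟫ := by
  have hstep : ∀ i : Fin n, gramEnergy M (partialSweep v w (i + 1)) -
      gramEnergy M (partialSweep v w i) =
        2 * ⟪w i - v i, ∑ l ∈ Iio i, M i l • w l + ∑ l ∈ Ioi i, M i l • v l⟫ := by
    intro i
    rw [gramEnergy_sub_of_eq_of_ne hM (hMdiag i) fun j hj => partialSweep_succ_eq_of_ne v w i hj,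
      localField_partialSweep hMdiag]
    simp [partialSweep]
  have hw : partialSweep v w n = w := funext fun j => if_pos j.isLt
  have hv : partialSweep v w 0 = v := rfl
  set energyAt := fun k => gramEnergy M (partialSweep v w k)
  calc gramEnergy M w - gramEnergy M v = energyAt n - energyAt 0 := by simp only [energyAt, hw, hv]
    _ = ∑ k ∈ range n, (energyAt (k + 1) - energyAt k) := (sum_range_sub _ n).symm
    _ = ∑ i : Fin n, (energyAt (i + 1) - energyAt i) :=
        (Fin.sum_univ_eq_sum_range (fun k => energyAt (k + 1) - energyAt k) n).symm
    _ = _ := sum_congr rfl fun i _ => hstep i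

end

lemma two_inner_sub_eq_of_smul_eq {E : Type*} [NormedAddCommGroup E] [InnerProductSpace ℝ E]
    {v w g : E} {y θ : ℝ} (hv : ‖v‖ = 1) (hw : ‖w‖ = 1) (hθ : θ ≠ 0)
    (h : θ • g = v - y • w) :
    2 * ⟪w - v, g⟫ = -((1 + y) / θ * ‖w - v‖ ^ 2) := by
  have hg : g = θ⁻¹ • (v - y • w) := by rw [← h, inv_smul_smul₀ hθ]
  rw [hg, real_inner_smul_right, norm_sub_sq_real, hv, hw]
  simp only [inner_sub_left, inner_sub_right, real_inner_smul_right, real_inner_self_eq_norm_sq,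
    hv, hw, real_inner_comm v w]
  field_simp
  ring

theorem stmt_11_general {E : Type*} [NormedAddCommGroup E] [InnerProductSpace ℝ E]
    (n : ℕ) (M : Matrix (Fin n) (Fin n) ℝ)
    (hMsymm : M.IsSymm) (hMdiag : ∀ i, M i i = 0)
    (v w g : Fin n → E) (y θ : Fin n → ℝ)
    (hv : ∀ i, ‖v i‖ = 1) (hθ : ∀ i, 0 < θ i)
    (hg : ∀ i, g i = (∑ l ∈ Finset.Iio i, M i l • w l) + ∑ l ∈ Finset.Ioi i, M i l • v l)
    (hy : ∀ i, y i = ‖v i - θ i • g i‖) (hy0 : ∀ i, 0 < y i)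
    (hw : ∀ i, w i = (y i)⁻¹ • (v i - θ i • g i)) :
    (∑ i, ∑ j, M i j * ⟪w i, w j⟫) ≤ (∑ i, ∑ j, M i j * ⟪v i, v j⟫) ∧
      ((∑ i, ∑ j, M i j * ⟪w i, w j⟫) = (∑ i, ∑ j, M i j * ⟪v i, v j⟫) ↔
        ∀ i, w i = v i) := by
  have hdescent : gramEnergy M w - gramEnergy M v =
      -∑ i, (1 + y i) / θ i * ‖w i - v i‖ ^ 2 := by
    rw [gramEnergy_sub_eq_sum_sweep hMsymm hMdiag, ← sum_neg_distrib]
    refine sum_congr rfl fun i _ => ?_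
    rw [← hg i]
    refine two_inner_sub_eq_of_smul_eq (hv i) ?_ (hθ i).ne' ?_
    · rw [hw i, hy i]
      exact norm_smul_inv_norm (norm_pos_iff.1 (hy i ▸ hy0 i))
    · rw [hw i, smul_smul, mul_inv_cancel₀ (hy0 i).ne', one_smul, sub_sub_cancel]
  have hterm : ∀ i, 0 ≤ (1 + y i) / θ i * ‖w i - v i‖ ^ 2 := fun i => by
    have := hy0 i
    have := hθ i
    positivity
  change gramEnergy M w ≤ gramEnergy M v ∧ (gramEnergy M w = gramEnergy M v ↔ _)
  refine ⟨by linarith [sum_nonneg fun i (_ : i ∈ univ) => hterm i], fun h i => ?_, fun h => ?_⟩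
  · have hcoef : (1 + y i) / θ i ≠ 0 := (div_pos (by linarith [hy0 i]) (hθ i)).ne'
    have := (sum_eq_zero_iff_of_nonneg fun i _ => hterm i).1 (by linarith) i (mem_univ i)
    simpa [hcoef, sub_eq_zero] using this
  · rw [funext h]

/-- Strict-decrease property of one Gauss–Seidel sweep (monotonicity step in Theorem 1). -/
theorem stmt_11 {E : Type*} [NormedAddCommGroup E] [InnerProductSpace ℝ E]
    (n : ℕ) (hn : 0 < n) (M : Matrix (Fin n) (Fin n) ℝ)
    (hMsymm : M.IsSymm) (hMdiag : ∀ i, M i i = 0)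
    (v w g : Fin n → E) (y θ : Fin n → ℝ)
    (hv : ∀ i, ‖v i‖ = 1) (hθ : ∀ i, 0 < θ i)
    (hg : ∀ i, g i = (∑ l ∈ Finset.Iio i, M i l • w l) + ∑ l ∈ Finset.Ioi i, M i l • v l)
    (hy : ∀ i, y i = ‖v i - θ i • g i‖) (hy0 : ∀ i, 0 < y i)
    (hw : ∀ i, w i = (y i)⁻¹ • (v i - θ i • g i)) :
    (∑ i, ∑ j, M i j * ⟪w i, w j⟫) ≤ (∑ i, ∑ j, M i j * ⟪v i, v j⟫) ∧
      ((∑ i, ∑ j, M i j * ⟪w i, w j⟫) = (∑ i, ∑ j, M i j * ⟪v i, v j⟫) ↔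
        ∀ i, w i = v i) :=
  stmt_11_general n M hMsymm hMdiag v w g y θ hv hθ hg hy hy0 hw
end

section
/- Let E be a real inner product space and let c ∈ E with ‖c‖ < 1. Then the map φ defined by φ(v) = (v − c)/‖v − c‖ is a well-defined bijection from the unit sphere {v ∈ E : ‖v‖ = 1} onto itself; in particular ‖v − c‖ ≥ 1 − ‖c‖ > 0 for every unit vector v. -/
open Metric

/-!
Write a unit vector `v` as `c + t • w` with `w` the image of `v` and `t = ‖v - c‖ > 0`.
Inverting the map amounts to showing that every ray `t ↦ c + t • w` (`t > 0`) leaves the ball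
through exactly one point of its boundary sphere. It does so at least once by the intermediate
value theorem, since it starts inside the ball and its norm is unbounded; and at most once
because of convexity: a point strictly between the interior point `c` and a point of the
closed ball lies in the open ball. This works in any real normed space.
-/

section RayThroughSphere

variable {E : Type*} [NormedAddCommGroup E] [NormedSpace ℝ E]

theorem norm_add_smul_lt_of_lt {c w : E} {r s t : ℝ} (hc : ‖c‖ < r) (hs : 0 ≤ s) (hst : s < t)
    (ht : ‖c + t • w‖ ≤ r) : ‖c + s • w‖ < r := by
  have ht₀ : 0 < t := hs.trans_lt hst
  set θ := s / t
  have hθ₀ : 0 ≤ θ := div_nonneg hs ht₀.le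
  have hθ₁ : 0 < 1 - θ := sub_pos.2 ((div_lt_one ht₀).2 hst)
  have hcombo : c + s • w = (1 - θ) • c + θ • (c + t • w) := by
    rw [smul_add, smul_smul, div_mul_cancel₀ s ht₀.ne']
    module
  calc ‖c + s • w‖ ≤ (1 - θ) * ‖c‖ + θ * ‖c + t • w‖ := by
        rw [hcombo]
        refine (norm_add_le _ _).trans_eq ?_
        rw [norm_smul_of_nonneg hθ₁.le, norm_smul_of_nonneg hθ₀]
    _ < r := by
        have h₁ := mul_lt_mul_of_pos_left hc hθ₁
        have h₂ := mul_le_mul_of_nonneg_left ht hθ₀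
        linarith

theorem eq_of_norm_add_smul_eq {c w : E} {r s t : ℝ} (hc : ‖c‖ < r) (hs : 0 < s) (ht : 0 < t)
    (hs_eq : ‖c + s • w‖ = r) (ht_eq : ‖c + t • w‖ = r) : s = t := by
  rcases lt_trichotomy s t with hst | hst | hst
  · exact absurd hs_eq (norm_add_smul_lt_of_lt hc hs.le hst ht_eq.le).ne
  · exact hst
  · exact absurd ht_eq (norm_add_smul_lt_of_lt hc ht.le hst hs_eq.le).ne

theorem exists_pos_norm_add_smul_eq {c w : E} {r : ℝ} (hc : ‖c‖ < r) (hw : w ≠ 0) :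
    ∃ t : ℝ, 0 < t ∧ ‖c + t • w‖ = r := by
  have hw₀ : 0 < ‖w‖ := norm_pos_iff.2 hw
  set b := (r + ‖c‖) / ‖w‖
  have hb : 0 ≤ b := div_nonneg (by linarith [norm_nonneg c]) hw₀.le
  have hfb : r ≤ ‖c + b • w‖ := by
    have hbw : ‖b • w‖ = r + ‖c‖ := by
      rw [norm_smul_of_nonneg hb, div_mul_cancel₀ _ hw₀.ne']
    have := norm_sub_le (c + b • w) c
    rw [add_sub_cancel_left, hbw] at this
    linarith
  have hcont : Continuous fun t : ℝ => ‖c + t • w‖ := by fun_prop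
  obtain ⟨t, ht_mem, ht⟩ := intermediate_value_Icc hb hcont.continuousOn
    ⟨by simpa using hc.le, hfb⟩
  refine ⟨t, ht_mem.1.lt_of_ne ?_, ht⟩
  rintro rfl
  exact hc.ne (by simpa using ht)

theorem bijOn_normalize_sub_sphere {c : E} {r : ℝ} (hc : ‖c‖ < r) :
    Set.BijOn (fun v : E => ‖v - c‖⁻¹ • (v - c)) (sphere 0 r) (sphere 0 1) := by
  set f : E → E := fun v => ‖v - c‖⁻¹ • (v - c) with hf
  have hsub_ne : ∀ v ∈ sphere (0 : E) r, v - c ≠ 0 := by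
    rintro v hv hvc
    rw [sub_eq_zero.1 hvc, mem_sphere_zero_iff_norm] at hv
    exact hc.ne hv
  have hpos : ∀ v ∈ sphere (0 : E) r, 0 < ‖v - c‖ := fun v hv => norm_pos_iff.2 (hsub_ne v hv)
  have hdecomp : ∀ v : E, v = c + ‖v - c‖ • f v := fun v => by
    by_cases hvc : v - c = 0
    · simp [sub_eq_zero.1 hvc]
    · rw [smul_inv_smul₀ (norm_ne_zero_iff.2 hvc), add_sub_cancel]
  have hray : ∀ v ∈ sphere (0 : E) r, ‖c + ‖v - c‖ • f v‖ = r := fun v hv => by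
    rw [← hdecomp v, ← mem_sphere_zero_iff_norm]
    exact hv
  refine ⟨fun v hv => ?_, fun v hv v' hv' hvv' => ?_, fun w hw => ?_⟩
  · simpa using norm_smul_inv_norm (𝕜 := ℝ) (hsub_ne v hv)
  · have hnorm := eq_of_norm_add_smul_eq hc (hpos v hv) (hpos v' hv') (hray v hv)
      (hvv' ▸ hray v' hv')
    rw [hdecomp v, hdecomp v', hvv', hnorm]
  · have hw₁ : ‖w‖ = 1 := mem_sphere_zero_iff_norm.1 hw
    obtain ⟨t, ht, htr⟩ :=
      exists_pos_norm_add_smul_eq hc (norm_ne_zero_iff.1 (hw₁.trans_ne one_ne_zero))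
    refine ⟨c + t • w, mem_sphere_zero_iff_norm.2 htr, ?_⟩
    rw [hf]
    simp only [add_sub_cancel_left, norm_smul_of_nonneg ht.le, hw₁, mul_one]
    exact inv_smul_smul₀ ht.ne' w

end RayThroughSphere

/-- The map v ↦ (v - c)/‖v - c‖ with ‖c‖ < 1 is a well-defined bijection of the unit
sphere onto itself (invertibility fact underlying Lemma 3). -/
theorem stmt_14 {E : Type*} [NormedAddCommGroup E] [InnerProductSpace ℝ E]
    (c : E) (hc : ‖c‖ < 1) :
    (∀ v : E, ‖v‖ = 1 → ‖v - c‖ ≥ 1 - ‖c‖) ∧ (0 < 1 - ‖c‖) ∧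
      Set.BijOn (fun v : E => ‖v - c‖⁻¹ • (v - c))
        (Metric.sphere (0 : E) 1) (Metric.sphere (0 : E) 1) := by
  refine ⟨fun v hv => ?_, sub_pos.2 hc, bijOn_normalize_sub_sphere hc⟩
  simpa [hv] using norm_sub_norm_le v c
end
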